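/- arXiv:2601.09212 — 7 statements merged into one kernel-verified Lean document; each statement's English description precedes it below -/
import Mathlib

section
/- For any two probability distributions P, Q on a finite set X and any function f: X → [0,1] with f(x) ≥ min{1, P(x)/Q(x)} for all x (with 0/0 interpreted as 1), the infimum over distributions G on X of Σ_x |P(x) − Q(x)f(x) − G(x)·Σ_{x̃}(1−f(x̃))Q(x̃)| equals Σ_x |P(x) − Q(x)f(x)| − Σ_x (1−f(x))Q(x). -/
open Finset

/-- For probability distributions P, Q on a finite nonempty set X and
f : X → [0,1] with Q(x)·f(x) ≥ min{Q(x), P(x)} for all x, the infimum over probability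
distributions G of ∑ₓ |P(x) − Q(x)f(x) − G(x)·∑ₓ̃ (1−f(x̃))Q(x̃)| equals
∑ₓ |P(x) − Q(x)f(x)| − ∑ₓ (1−f(x))Q(x). -/
theorem stmt0 {X : Type*} [Fintype X] [Nonempty X]
    (P Q f : X → ℝ)
    (hP0 : ∀ x, 0 ≤ P x) (hP1 : ∑ x, P x = 1)
    (hQ0 : ∀ x, 0 ≤ Q x) (hQ1 : ∑ x, Q x = 1)
    (hf0 : ∀ x, 0 ≤ f x) (hf1 : ∀ x, f x ≤ 1)
    (hflow : ∀ x, min (Q x) (P x) ≤ Q x * f x) :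
    sInf {s : ℝ | ∃ G : X → ℝ, (∀ x, 0 ≤ G x) ∧ (∑ x, G x = 1) ∧
        s = ∑ x, |P x - Q x * f x - G x * ∑ y, (1 - f y) * Q y|}
      = ∑ x, |P x - Q x * f x| - ∑ x, (1 - f x) * Q x := by
  classical
  set a : X → ℝ := fun x => P x - Q x * f x with ha
  set c : ℝ := ∑ y, (1 - f y) * Q y with hc
  have hc0 : 0 ≤ c := Finset.sum_nonneg fun y _ =>
    mul_nonneg (by linarith [hf1 y]) (hQ0 y)
  have hsuma : ∑ x, a x = c := by
    have h1 : ∑ x, a x = 1 - ∑ x, Q x * f x := by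
      rw [ha]; rw [Finset.sum_sub_distrib, hP1]
    have h2 : c = 1 - ∑ x, Q x * f x := by
      rw [hc, show (∑ y : X, (1 - f y) * Q y) = ∑ y : X, (Q y - Q y * f y) from
        Finset.sum_congr rfl fun y _ => by ring]
      rw [Finset.sum_sub_distrib, hQ1]
    rw [h1, h2]
  -- lower bound
  have hlb : ∀ G : X → ℝ, (∀ x, 0 ≤ G x) → (∑ x, G x = 1) →
      ∑ x, |a x| - c ≤ ∑ x, |a x - G x * c| := by
    intro G hG0 hG1
    have hterm : ∀ x ∈ Finset.univ, |a x| - G x * c ≤ |a x - G x * c| := by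
      intro x _
      have h := abs_sub_abs_le_abs_sub (a x) (G x * c)
      have habs : |G x * c| = G x * c := abs_of_nonneg (mul_nonneg (hG0 x) hc0)
      linarith
    have := Finset.sum_le_sum hterm
    have heq : ∑ x, (|a x| - G x * c) = ∑ x, |a x| - c := by
      rw [Finset.sum_sub_distrib, ← Finset.sum_mul, hG1, one_mul]
    linarith [heq ▸ this]
  have hSet : {s : ℝ | ∃ G : X → ℝ, (∀ x, 0 ≤ G x) ∧ (∑ x, G x = 1) ∧
      s = ∑ x, |a x - G x * c|} =
      {s : ℝ | ∃ G : X → ℝ, (∀ x, 0 ≤ G x) ∧ (∑ x, G x = 1) ∧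
      s = ∑ x, |P x - Q x * f x - G x * ∑ y, (1 - f y) * Q y|} := rfl
  -- membership of target value
  have hmem : (∑ x, |a x| - c) ∈ {s : ℝ | ∃ G : X → ℝ, (∀ x, 0 ≤ G x) ∧ (∑ x, G x = 1) ∧
      s = ∑ x, |a x - G x * c|} := by
    by_cases hcz : c = 0
    · refine ⟨fun _ => (Fintype.card X : ℝ)⁻¹, fun x => by positivity, ?_, ?_⟩
      · rw [Finset.sum_const, Finset.card_univ, nsmul_eq_mul]
        field_simp
      · simp [hcz]
    · have hcpos : 0 < c := lt_of_le_of_ne hc0 (Ne.symm hcz)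
      set S : ℝ := ∑ x, max (a x) 0 with hS
      have hcS : c ≤ S := by
        rw [← hsuma, hS]
        exact Finset.sum_le_sum fun x _ => le_max_left _ _
      have hSpos : 0 < S := lt_of_lt_of_le hcpos hcS
      refine ⟨fun x => max (a x) 0 / S, fun x => by positivity, ?_, ?_⟩
      · rw [← Finset.sum_div, ← hS, div_self (ne_of_gt hSpos)]
      · have hterm : ∀ x ∈ Finset.univ,
            |a x - max (a x) 0 / S * c| = |a x| - max (a x) 0 / S * c := by
          intro x _
          by_cases hax : 0 ≤ a x
          · have h1 : max (a x) 0 = a x := max_eq_left hax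
            rw [h1, abs_of_nonneg hax]
            have hle : a x / S * c ≤ a x := by
              rw [div_mul_eq_mul_div, div_le_iff₀ hSpos]
              nlinarith
            have hge : 0 ≤ a x / S * c := by positivity
            rw [abs_of_nonneg (by linarith)]
          · have h1 : max (a x) 0 = 0 := max_eq_right (le_of_not_ge hax)
            rw [h1]; simp
        rw [Finset.sum_congr rfl hterm, Finset.sum_sub_distrib]
        congr 1
        have hsc : ∑ x, max (a x) 0 / S * c = c := by
          calc ∑ x, max (a x) 0 / S * c = ∑ x, max (a x) 0 * (c / S) :=
                Finset.sum_congr rfl fun x _ => by ring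
            _ = S * (c / S) := by rw [← Finset.sum_mul, ← hS]
            _ = c := by field_simp
        exact hsc.symm
  rw [← hSet]
  refine le_antisymm (csInf_le ⟨∑ x, |a x| - c, fun s hs => ?_⟩ hmem) ?_
  · obtain ⟨G, hG0, hG1, rfl⟩ := hs
    exact hlb G hG0 hG1
  · refine le_csInf ⟨_, hmem⟩ ?_
    rintro s ⟨G, hG0, hG1, rfl⟩
    exact hlb G hG0 hG1
end

section
/- Let P, Q be probability distributions on a finite set X and f: X → [0,1] satisfy f(x) ≥ min{1, P(x)/Q(x)} for all x. Assume Σ_x (1−f(x))Q(x) > 0. Then the distribution G*(x) = [P(x) − Q(x)f(x)]_+ / Σ_{x̃}[P(x̃) − Q(x̃)f(x̃)]_+ achieves Σ_x |P(x) − Q(x)f(x) − G*(x)·Σ_{x̃}(1−f(x̃))Q(x̃)| = Σ_x |P(x) − Q(x)f(x)| − Σ_x (1−f(x))Q(x). -/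
open Finset

/-- If moreover ∑ₓ (1−f(x))Q(x) > 0, the distribution
G*(x) = [P(x) − Q(x)f(x)]₊ / ∑ₓ̃ [P(x̃) − Q(x̃)f(x̃)]₊ achieves
∑ₓ |P(x) − Q(x)f(x) − G*(x)·∑ₓ̃ (1−f(x̃))Q(x̃)| = ∑ₓ |P(x) − Q(x)f(x)| − ∑ₓ (1−f(x))Q(x). -/
theorem stmt1 {X : Type*} [Fintype X] [Nonempty X]
    (P Q f : X → ℝ)
    (hP0 : ∀ x, 0 ≤ P x) (hP1 : ∑ x, P x = 1)
    (hQ0 : ∀ x, 0 ≤ Q x) (hQ1 : ∑ x, Q x = 1)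
    (hf0 : ∀ x, 0 ≤ f x) (hf1 : ∀ x, f x ≤ 1)
    (hflow : ∀ x, min (Q x) (P x) ≤ Q x * f x)
    (hr : 0 < ∑ x, (1 - f x) * Q x) :
    ∑ x, |P x - Q x * f x -
        (max (P x - Q x * f x) 0 / ∑ y, max (P y - Q y * f y) 0) *
          ∑ y, (1 - f y) * Q y|
      = ∑ x, |P x - Q x * f x| - ∑ x, (1 - f x) * Q x := by
  set a : X → ℝ := fun x => P x - Q x * f x with ha
  set r : ℝ := ∑ x, (1 - f x) * Q x with hrdef
  set S : ℝ := ∑ y, max (a y) 0 with hSdef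
  have hsum_a : ∑ x, a x = r := by
    rw [hrdef, ← sub_eq_zero, ← Finset.sum_sub_distrib]
    have : ∀ x, a x - (1 - f x) * Q x = P x - Q x := by intro x; simp [ha]; ring
    simp only [this, Finset.sum_sub_distrib, hP1, hQ1, sub_self]
  have hrS : r ≤ S := by
    rw [← hsum_a]
    exact Finset.sum_le_sum fun x _ => le_max_left _ _
  have hS : 0 < S := lt_of_lt_of_le hr hrS
  have hterm : ∀ x, |a x - (max (a x) 0 / S) * r|
      = max (a x) 0 * (1 - r / S) + (max (a x) 0 - a x) := by
    intro x
    rcases le_or_gt (a x) 0 with h | h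
    · rw [max_eq_right h]
      simp [abs_of_nonpos h]
    · rw [max_eq_left h.le]
      have h1 : a x - a x / S * r = a x * (1 - r / S) := by ring
      have h2 : 0 ≤ 1 - r / S := by
        rw [sub_nonneg, div_le_one hS]; exact hrS
      rw [h1, abs_of_nonneg (mul_nonneg h.le h2)]
      ring
  have habs : ∀ x, |a x| = 2 * max (a x) 0 - a x := by
    intro x
    rcases le_or_gt (a x) 0 with h | h
    · rw [max_eq_right h, abs_of_nonpos h]; ring
    · rw [max_eq_left h.le, abs_of_pos h]; ring
  calc ∑ x, |a x - (max (a x) 0 / S) * r|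
      = ∑ x, (max (a x) 0 * (1 - r / S) + (max (a x) 0 - a x)) := by
        exact Finset.sum_congr rfl fun x _ => hterm x
    _ = S * (1 - r / S) + (S - r) := by
        rw [Finset.sum_add_distrib, ← Finset.sum_mul, Finset.sum_sub_distrib, hsum_a]
    _ = 2 * S - 2 * r := by field_simp; ring
    _ = ∑ x, |a x| - r := by
        rw [show ∑ x, |a x| = ∑ x, (2 * max (a x) 0 - a x) from
          Finset.sum_congr rfl fun x _ => habs x]
        rw [Finset.sum_sub_distrib, ← Finset.mul_sum, hsum_a]
        ring
end

section
/- Let X be a finite set, P and Q probability distributions on X. Define f_van(x) = min{1, P(x)/Q(x)} (with 0/0 = 1) and, assuming Σ_x [P(x)−Q(x)]_+ > 0, define G_van(x) = [P(x)−Q(x)]_+ / Σ_{x̃}[P(x̃)−Q(x̃)]_+. Then for every x ∈ X: Q(x)f_van(x) + G_van(x)·Σ_{x̃}(1−f_van(x̃))Q(x̃) = P(x). That is, one step of vanilla speculative decoding exactly reproduces the target distribution P. -/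
open Finset

/-- The vanilla acceptance probability min{1, P(x)/Q(x)}, with 0/0 interpreted as 1. -/
noncomputable def fvan {X : Type*} (P Q : X → ℝ) (x : X) : ℝ :=
  if Q x = 0 then 1 else min 1 (P x / Q x)

lemma fvan_mul {X : Type*} (P Q : X → ℝ) (hP0 : ∀ x, 0 ≤ P x) (hQ0 : ∀ x, 0 ≤ Q x) (x : X) :
    Q x * fvan P Q x = min (P x) (Q x) := by
  unfold fvan
  by_cases h : Q x = 0
  · simp [h, hP0 x]
  · rw [if_neg h, mul_min_of_nonneg _ _ (hQ0 x), mul_one, mul_div_cancel₀ _ h, min_comm]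

/-- with f_van(x) = min{1, P(x)/Q(x)} (0/0 = 1) and
G_van(x) = [P(x)−Q(x)]₊ / ∑ₓ̃ [P(x̃)−Q(x̃)]₊ (assuming the denominator is positive),
one step of vanilla speculative decoding is exact:
Q(x)f_van(x) + G_van(x)·∑ₓ̃ (1−f_van(x̃))Q(x̃) = P(x) for every x. -/
theorem stmt7 {X : Type*} [Fintype X]
    (P Q : X → ℝ)
    (hP0 : ∀ x, 0 ≤ P x) (hP1 : ∑ x, P x = 1)
    (hQ0 : ∀ x, 0 ≤ Q x) (hQ1 : ∑ x, Q x = 1)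
    (hpos : 0 < ∑ x, max (P x - Q x) 0) :
    ∀ x, Q x * fvan P Q x +
        (max (P x - Q x) 0 / ∑ y, max (P y - Q y) 0) *
          ∑ y, (1 - fvan P Q y) * Q y
      = P x := by
  intro x
  have key : ∀ y, (1 - fvan P Q y) * Q y = max (P y - Q y) 0 + (Q y - P y) := by
    intro y
    have := fvan_mul P Q hP0 hQ0 y
    rcases le_or_gt (P y) (Q y) with h | h
    · rw [sub_mul, one_mul, mul_comm, this, min_eq_left h,
        max_eq_right (by linarith)]; ring
    · rw [sub_mul, one_mul, mul_comm, this, min_eq_right h.le,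
        max_eq_left (by linarith)]; ring
  have hsum : ∑ y, (1 - fvan P Q y) * Q y = ∑ y, max (P y - Q y) 0 := by
    simp only [key, Finset.sum_add_distrib, Finset.sum_sub_distrib, hP1, hQ1]
    ring
  rw [hsum, div_mul_cancel₀ _ (ne_of_gt hpos), fvan_mul P Q hP0 hQ0]
  rcases le_or_gt (P x) (Q x) with h | h
  · rw [min_eq_left h, max_eq_right (by linarith)]; ring
  · rw [min_eq_right h.le, max_eq_left (by linarith)]; ring
end

section
/- Let P, Q be probability distributions on a finite set X, f: X → [0,1] with f ≥ min{1, P/Q} pointwise, and set r = Σ_x (1−f(x))Q(x). If r > 0, then for the optimal resampling distribution G*(x) = [P(x) − Q(x)f(x)]_+ / Σ_{x̃}[P(x̃) − Q(x̃)f(x̃)]_+, the one-step output P̂(x) = Q(x)f(x) + G*(x)·r satisfies TV(P̂, P) = (1/2)(Σ_x |P(x) − Q(x)f(x)| − r). -/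
/-! With `d = P - Q f`, the normalisation of `P` and `Q` gives `r = ∑ d`, so the error
`P̂ - P = G* r - d` only depends on `d`. Where `d ≤ 0` the error is `-d = |d|`; where `d > 0`
it is `d (1 - r / S)` with `S = ∑ d⁺ ≥ r`, i.e. `|d|` minus the mass `d⁺ r / S`, and this mass
sums to `r`. -/

open Finset

/-- Total variation distance between two functions on a finite set. -/
noncomputable def tvDist {X : Type*} [Fintype X] (μ ν : X → ℝ) : ℝ :=
  (1/2) * ∑ x, |μ x - ν x|

lemma abs_sub_max_zero_mul {a c : ℝ} (hc : c ≤ 1) :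
    |a - max a 0 * c| = |a| - max a 0 * c := by
  rcases le_or_gt a 0 with ha | ha
  · simp [max_eq_right ha]
  · rw [max_eq_left ha.le, abs_of_pos ha, abs_of_nonneg (by nlinarith)]

theorem sum_abs_sub_rescaled_posPart {ι : Type*} (s : Finset ι) (d : ι → ℝ)
    (hd : 0 < ∑ i ∈ s, d i) :
    ∑ i ∈ s, |d i - max (d i) 0 / (∑ j ∈ s, max (d j) 0) * ∑ j ∈ s, d j|
      = ∑ i ∈ s, |d i| - ∑ i ∈ s, d i := by
  set S := ∑ j ∈ s, max (d j) 0
  have hdS : ∑ i ∈ s, d i ≤ S := sum_le_sum fun i _ => le_max_left _ _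
  have hS : 0 < S := hd.trans_le hdS
  have hc : (∑ i ∈ s, d i) / S ≤ 1 := (div_le_one hS).mpr hdS
  calc ∑ i ∈ s, |d i - max (d i) 0 / S * ∑ j ∈ s, d j|
      = ∑ i ∈ s, (|d i| - max (d i) 0 * ((∑ j ∈ s, d j) / S)) := by
        refine sum_congr rfl fun i _ => ?_
        rw [← abs_sub_max_zero_mul hc, div_mul_eq_mul_div, mul_div_assoc]
    _ = ∑ i ∈ s, |d i| - ∑ i ∈ s, d i := by
        rw [sum_sub_distrib, ← sum_mul, mul_div_cancel₀ _ hS.ne']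

theorem stmt9_general {X : Type*} [Fintype X]
    (P Q f : X → ℝ)
    (hP1 : ∑ x, P x = 1)
    (hQ1 : ∑ x, Q x = 1)
    (hr : 0 < ∑ x, (1 - f x) * Q x) :
    tvDist
        (fun x => Q x * f x +
          (max (P x - Q x * f x) 0 / ∑ y, max (P y - Q y * f y) 0) *
            ∑ y, (1 - f y) * Q y) P
      = (1/2) * (∑ x, |P x - Q x * f x| - ∑ x, (1 - f x) * Q x) := by
  have hr_eq : ∑ x, (1 - f x) * Q x = ∑ x, (P x - Q x * f x) := by
    simp only [sub_mul, one_mul, sum_sub_distrib, hP1, hQ1, mul_comm (f _)]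
  rw [hr_eq] at hr ⊢
  rw [tvDist, ← sum_abs_sub_rescaled_posPart (univ : Finset X) (fun x => P x - Q x * f x) hr]
  congr 1
  refine sum_congr rfl fun x _ => ?_
  rw [← abs_neg]
  congr 1
  ring

/-- with f ≥ min{1, P/Q} pointwise (i.e. Q(x)f(x) ≥ min{Q(x),P(x)}),
r = ∑ₓ (1−f(x))Q(x) > 0, and the optimal resampling distribution
G*(x) = [P(x) − Q(x)f(x)]₊ / ∑ₓ̃ [P(x̃) − Q(x̃)f(x̃)]₊, the one-step output
P̂(x) = Q(x)f(x) + G*(x)·r satisfies TV(P̂, P) = (1/2)(∑ₓ |P(x) − Q(x)f(x)| − r). -/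
theorem stmt9 {X : Type*} [Fintype X]
    (P Q f : X → ℝ)
    (hP0 : ∀ x, 0 ≤ P x) (hP1 : ∑ x, P x = 1)
    (hQ0 : ∀ x, 0 ≤ Q x) (hQ1 : ∑ x, Q x = 1)
    (hf0 : ∀ x, 0 ≤ f x) (hf1 : ∀ x, f x ≤ 1)
    (hflow : ∀ x, min (Q x) (P x) ≤ Q x * f x)
    (hr : 0 < ∑ x, (1 - f x) * Q x) :
    tvDist
        (fun x => Q x * f x +
          (max (P x - Q x * f x) 0 / ∑ y, max (P y - Q y * f y) 0) *
            ∑ y, (1 - f y) * Q y) P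
      = (1/2) * (∑ x, |P x - Q x * f x| - ∑ x, (1 - f x) * Q x) :=
  stmt9_general P Q f hP1 hQ1 hr
end

section
/- Let P, Q be probability distributions on a finite set X, f: X → [0,1] with f ≥ min{1, P/Q} pointwise and Σ_x(1−f(x))Q(x) > 0, G* = Norm([P − Q·f]_+), and P̂(x) = Q(x)f(x) + G*(x)·Σ_{x̃}(1−f(x̃))Q(x̃). If moreover f(x) = min{1, ω·P(x)/Q(x)} for some ω ≥ 1, then TV(P̂, P) = Σ_x [Q(x)f(x) − P(x)]_+ ≤ Σ_x [min{Q(x), ωP(x)} − P(x)]_+ ≤ (ω−1)Σ_x P(x) = ω − 1; in particular TV(P̂, P) ≤ ω − 1. -/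
open Finset

/-- The relaxed acceptance probability min{1, ω·P(x)/Q(x)}, with 0/0 interpreted as 1. -/
noncomputable def frel {X : Type*} (P Q : X → ℝ) (ω : ℝ) (x : X) : ℝ :=
  if Q x = 0 then 1 else min 1 (ω * P x / Q x)

/-- for f(x) = min{1, ωP(x)/Q(x)} with ω ≥ 1, r = ∑ₓ (1−f(x))Q(x) > 0,
G* = Norm([P − Q·f]₊) and P̂(x) = Q(x)f(x) + G*(x)·r, one has
TV(P̂,P) = ∑ₓ [Q(x)f(x) − P(x)]₊ ≤ ω − 1. -/
theorem stmt12 {X : Type*} [Fintype X]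
    (P Q : X → ℝ)
    (hP0 : ∀ x, 0 ≤ P x) (hP1 : ∑ x, P x = 1)
    (hQ0 : ∀ x, 0 ≤ Q x) (hQ1 : ∑ x, Q x = 1)
    (ω : ℝ) (hω : 1 ≤ ω)
    (hr : 0 < ∑ x, (1 - frel P Q ω x) * Q x) :
    tvDist
        (fun x => Q x * frel P Q ω x +
          (max (P x - Q x * frel P Q ω x) 0 / ∑ y, max (P y - Q y * frel P Q ω y) 0) *
            ∑ y, (1 - frel P Q ω y) * Q y) P
        = ∑ x, max (Q x * frel P Q ω x - P x) 0 ∧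
    tvDist
        (fun x => Q x * frel P Q ω x +
          (max (P x - Q x * frel P Q ω x) 0 / ∑ y, max (P y - Q y * frel P Q ω y) 0) *
            ∑ y, (1 - frel P Q ω y) * Q y) P
        ≤ ω - 1 := by
  classical
  set f := frel P Q ω with hfdef
  have hm : ∀ x, Q x * f x = min (Q x) (ω * P x) := by
    intro x
    by_cases h : Q x = 0
    · have h0 : 0 ≤ ω * P x := mul_nonneg (by linarith) (hP0 x)
      simp [hfdef, frel, h, min_eq_left h0]
    · have hQpos : 0 < Q x := lt_of_le_of_ne (hQ0 x) (Ne.symm h)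
      simp only [hfdef, frel, if_neg h]
      rw [mul_min_of_nonneg _ _ (le_of_lt hQpos), mul_one, mul_div_cancel₀ _ h]
  have hg0 : ∀ x, 0 ≤ Q x * f x := fun x => by
    rw [hm x]; exact le_min (hQ0 x) (mul_nonneg (by linarith) (hP0 x))
  have hg_le_Q : ∀ x, Q x * f x ≤ Q x := fun x => by rw [hm x]; exact min_le_left _ _
  have hg_le : ∀ x, Q x * f x ≤ ω * P x := fun x => by rw [hm x]; exact min_le_right _ _
  set S := ∑ y, max (P y - Q y * f y) 0 with hSdef
  set T := ∑ y, max (Q y * f y - P y) 0 with hTdef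
  set r := ∑ y, (1 - f y) * Q y with hrdef
  have hT0 : 0 ≤ T := Finset.sum_nonneg fun x _ => le_max_right _ _
  have key : ∀ a : ℝ, max a 0 - max (-a) 0 = a := by
    intro a
    rcases le_total a 0 with h | h
    · rw [max_eq_right h, max_eq_left (by linarith)]; ring
    · rw [max_eq_left h, max_eq_right (by linarith)]; ring
  have hST : S - T = r := by
    rw [hSdef, hTdef, hrdef, ← Finset.sum_sub_distrib]
    have : ∀ y : X, max (P y - Q y * f y) 0 - max (Q y * f y - P y) 0
        = P y - Q y * f y := by
      intro y
      have := key (P y - Q y * f y)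
      rw [neg_sub] at this
      exact this
    rw [Finset.sum_congr rfl fun y _ => this y]
    have h2 : ∀ y : X, (1 - f y) * Q y = Q y - Q y * f y := fun y => by ring
    rw [Finset.sum_congr rfl fun y _ => h2 y, Finset.sum_sub_distrib,
      Finset.sum_sub_distrib, hP1, hQ1]
  have hS_pos : 0 < S := by linarith
  have hrS : r ≤ S := by linarith
  have hpt : ∀ x, |(Q x * f x + (max (P x - Q x * f x) 0 / S) * r) - P x|
      = max (P x - Q x * f x) 0 * (1 - r / S) + max (Q x * f x - P x) 0 := by
    intro x
    rcases le_total (Q x * f x) (P x) with h | h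
    · rw [max_eq_left (by linarith), max_eq_right (by linarith)]
      have hnp : (Q x * f x + (P x - Q x * f x) / S * r) - P x ≤ 0 := by
        have : (P x - Q x * f x) / S * r ≤ P x - Q x * f x := by
          rw [div_mul_eq_mul_div, div_le_iff₀ hS_pos]
          exact mul_le_mul_of_nonneg_left hrS (by linarith)
        linarith
      rw [abs_of_nonpos hnp]
      field_simp
      ring
    · rw [max_eq_right (by linarith), max_eq_left (by linarith)]
      have : (Q x * f x + (0:ℝ) / S * r) - P x = Q x * f x - P x := by
        rw [zero_div]; ring
      rw [this, abs_of_nonneg (by linarith)]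
      ring
  have hsum : ∑ x, |(Q x * f x + (max (P x - Q x * f x) 0 / S) * r) - P x| = 2 * T := by
    rw [Finset.sum_congr rfl fun x _ => hpt x, Finset.sum_add_distrib,
      ← Finset.sum_mul]
    rw [← hSdef, ← hTdef]
    have : S * (1 - r / S) = S - r := by field_simp
    rw [this]
    linarith
  have htv : tvDist
      (fun x => Q x * f x + (max (P x - Q x * f x) 0 / S) * r) P = T := by
    rw [tvDist, hsum]; ring
  constructor
  · exact htv
  · rw [htv]
    have hTle : T ≤ ω - 1 := by
      have : T ≤ ∑ x, (ω - 1) * P x := by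
        apply Finset.sum_le_sum
        intro x _
        exact max_le (by linarith [hg_le x]) (mul_nonneg (by linarith) (hP0 x))
      rw [← Finset.mul_sum, hP1, mul_one] at this
      exact this
    exact hTle
end

section
/- Let P, Q be probability distributions on a finite set X, f: X → [0,1] with f ≥ min{1, P/Q} pointwise, r = Σ_x (1−f(x))Q(x) > 0, and G* = Norm([P − Q·f]_+). Then the one-step output distribution P̂(x) = Q(x)f(x) + G*(x)r satisfies TV(P̂, P) = Σ_x [Q(x)f(x) − P(x)]_+. -/
open Finset

lemma key_term (a S T r : ℝ) (hS : 0 < S) (hT : 0 ≤ T) (hrel : r = S - T) :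
    |max a 0 / S * r - a| = max (-a) 0 + max a 0 / S * T := by
  rcases le_or_gt a 0 with h | h
  · rw [max_eq_right h, max_eq_left (by linarith)]
    simp [abs_of_nonpos h]
  · rw [max_eq_left h.le, max_eq_right (by linarith)]
    have : a / S * r - a = -(a / S * T) := by
      field_simp
      ring_nf
      nlinarith [hS]
    rw [this, abs_neg, abs_of_nonneg (by positivity)]
    ring

/-- with f ≥ min{1, P/Q} pointwise (i.e. Q(x)f(x) ≥ min{Q(x),P(x)}),
r = ∑ₓ (1−f(x))Q(x) > 0 and G* = Norm([P − Q·f]₊), the one-step output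
P̂(x) = Q(x)f(x) + G*(x)·r satisfies TV(P̂, P) = ∑ₓ [Q(x)f(x) − P(x)]₊. -/
theorem stmt13 {X : Type*} [Fintype X]
    (P Q f : X → ℝ)
    (hP0 : ∀ x, 0 ≤ P x) (hP1 : ∑ x, P x = 1)
    (hQ0 : ∀ x, 0 ≤ Q x) (hQ1 : ∑ x, Q x = 1)
    (hf0 : ∀ x, 0 ≤ f x) (hf1 : ∀ x, f x ≤ 1)
    (hflow : ∀ x, min (Q x) (P x) ≤ Q x * f x)
    (hr : 0 < ∑ x, (1 - f x) * Q x) :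
    tvDist
        (fun x => Q x * f x +
          (max (P x - Q x * f x) 0 / ∑ y, max (P y - Q y * f y) 0) *
            ∑ y, (1 - f y) * Q y) P
      = ∑ x, max (Q x * f x - P x) 0 := by
  set S := ∑ y, max (P y - Q y * f y) 0 with hSdef
  set r := ∑ y, (1 - f y) * Q y with hrdef
  set T := ∑ x, max (Q x * f x - P x) 0 with hTdef
  have hT0 : 0 ≤ T := Finset.sum_nonneg fun x _ => le_max_right _ _
  have hrel : r = S - T := by
    have h1 : r = ∑ x, (P x - Q x * f x) := by
      rw [hrdef]
      have : ∑ x, (1 - f x) * Q x = ∑ x, Q x - ∑ x, Q x * f x := by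
        rw [← Finset.sum_sub_distrib]; apply Finset.sum_congr rfl; intros; ring
      rw [this, hQ1, ← hP1, ← Finset.sum_sub_distrib]
    rw [h1, hSdef, hTdef, ← Finset.sum_sub_distrib]
    apply Finset.sum_congr rfl; intro x _
    rw [show Q x * f x - P x = -(P x - Q x * f x) by ring,
      max_zero_sub_max_neg_zero_eq_self]
  have hS : 0 < S := by linarith
  unfold tvDist
  have hterm : ∀ x, |(Q x * f x + max (P x - Q x * f x) 0 / S * r) - P x|
      = max (-(P x - Q x * f x)) 0 + max (P x - Q x * f x) 0 / S * T := by
    intro x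
    have := key_term (P x - Q x * f x) S T r hS hT0 hrel
    rw [← this]; ring_nf
  simp only [hterm]
  rw [Finset.sum_add_distrib]
  have h2 : ∑ x, max (-(P x - Q x * f x)) 0 = T := by
    rw [hTdef]; apply Finset.sum_congr rfl; intro x _; rw [neg_sub]
  have h3 : ∑ x, max (P x - Q x * f x) 0 / S * T = T := by
    rw [← Finset.sum_mul, ← Finset.sum_div, ← hSdef, div_mul_eq_mul_div,
      mul_div_assoc]
    field_simp
  rw [h2, h3]; ring
end

section
/- Let P, Q be probability distributions on a finite set X with TV(P,Q) ≤ 2/5, and let f: X → [0,1] satisfy f ≥ min{1, P/Q} pointwise. Then Σ_x Q(x)f(x) ≥ Δ(f) + 1/5, where Δ(f) := Σ_x |P(x) − Q(x)f(x)| − Σ_x Q(x)(1 − f(x)). -/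
open Finset

/-- Proposition 4, single-prefix version: if TV(P,Q) ≤ 2/5 and
f : X → [0,1] satisfies Q(x)f(x) ≥ min{Q(x),P(x)} pointwise, then
∑ₓ Q(x)f(x) ≥ Δ(f) + 1/5, where Δ(f) = ∑ₓ |P(x) − Q(x)f(x)| − ∑ₓ Q(x)(1 − f(x)). -/
theorem stmt17 {X : Type*} [Fintype X]
    (P Q f : X → ℝ)
    (hP0 : ∀ x, 0 ≤ P x) (hP1 : ∑ x, P x = 1)
    (hQ0 : ∀ x, 0 ≤ Q x) (hQ1 : ∑ x, Q x = 1)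
    (hf0 : ∀ x, 0 ≤ f x) (hf1 : ∀ x, f x ≤ 1)
    (hflow : ∀ x, min (Q x) (P x) ≤ Q x * f x)
    (hTV : (1/2) * ∑ x, |P x - Q x| ≤ 2/5) :
    (∑ x, |P x - Q x * f x| - ∑ x, Q x * (1 - f x)) + 1/5 ≤ ∑ x, Q x * f x := by
  have hterm : ∀ x, |P x - Q x * f x| ≤ |P x - Q x| := by
    intro x
    have h1 : Q x * f x ≤ Q x := by
      exact mul_le_of_le_one_right (hQ0 x) (hf1 x)
    have h2 := hflow x
    rcases le_total (P x) (Q x) with h | h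
    · rw [min_eq_right h] at h2
      rw [abs_sub_comm (P x) (Q x * f x), abs_of_nonneg (by linarith),
        abs_sub_comm, abs_of_nonneg (by linarith)]
      linarith
    · rw [min_eq_left h] at h2
      rw [abs_of_nonneg (by linarith), abs_of_nonneg (by linarith)]
      linarith
  have hsum : ∑ x, |P x - Q x * f x| ≤ ∑ x, |P x - Q x| :=
    Finset.sum_le_sum fun x _ => hterm x
  have hexp : ∑ x, Q x * (1 - f x) = 1 - ∑ x, Q x * f x := by
    rw [Finset.sum_congr rfl (fun x _ => mul_sub (Q x) 1 (f x)),
      Finset.sum_sub_distrib]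
    simp [hQ1]
  rw [hexp]
  linarith
end
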